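/- Under the hypotheses that ψ₀' ∈ L²(ℝ) and π₀ ∈ L¹(ℝ) ∩ L²(ℝ), the time derivative of the d'Alembert solution, ∂ₜψ(x,t) = (ψ₀'(x+t) − ψ₀'(x−t))/2 + (π₀(x+t)+π₀(x−t))/2, converges to 0 in L²(−R,R) for every R > 0 as t → +∞. -/

import Mathlib

/-!
The squared velocity is bounded pointwise by `F (x + t) + F (x - t)`, where
`F = ψ₀' ^ 2 + π₀ ^ 2` is the integrable energy density. The integral of an integrable
function over a window of fixed length tends to `0` as the window escapes to `±∞`, so both
halves of the bound vanish in the limit: the energy in `[-R, R]` is carried away by the two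
travelling waves.
-/

open MeasureTheory Filter intervalIntegral

open scoped Topology

theorem tendsto_intervalIntegral_of_tendsto_atTop {ι E : Type*} [NormedAddCommGroup E]
    [NormedSpace ℝ E] {l : Filter ι} [l.IsCountablyGenerated] {μ : Measure ℝ} {f : ℝ → E}
    {a b : ι → ℝ}
    (hf : Integrable f μ) (ha : Tendsto a l atTop) (hb : Tendsto b l atTop) :
    Tendsto (fun i => ∫ x in a i..b i, f x ∂μ) l (𝓝 0) := by
  have h := (tendsto_integral_Ioi_zero (f := f) (μ := μ) ha).sub
    (tendsto_integral_Ioi_zero (f := f) (μ := μ) hb)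
  rw [sub_zero] at h
  exact h.congr fun i => integral_Ioi_sub_Ioi' hf.integrableOn hf.integrableOn

theorem tendsto_intervalIntegral_of_tendsto_atBot {ι E : Type*} [NormedAddCommGroup E]
    [NormedSpace ℝ E] {l : Filter ι} [l.IsCountablyGenerated] {μ : Measure ℝ} {f : ℝ → E}
    {a b : ι → ℝ}
    (hf : Integrable f μ) (ha : Tendsto a l atBot) (hb : Tendsto b l atBot) :
    Tendsto (fun i => ∫ x in a i..b i, f x ∂μ) l (𝓝 0) := by
  have h := (tendsto_integral_Iic_zero (f := f) (μ := μ) hb).sub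
    (tendsto_integral_Iic_zero (f := f) (μ := μ) ha)
  rw [sub_zero] at h
  exact h.congr fun i => integral_Iic_sub_Iic hf.integrableOn hf.integrableOn

theorem sq_half_sub_add_half_add_le (u v p q : ℝ) :
    ((u - v) / 2 + (p + q) / 2) ^ 2 ≤ (u ^ 2 + p ^ 2) + (v ^ 2 + q ^ 2) := by
  nlinarith [sq_nonneg (u + v), sq_nonneg (p - q), sq_nonneg (u - v - p - q)]

theorem dAlembert_velocity_tendsto_zero_general
    (ψ₀ π₀ : ℝ → ℝ)
    (hψ₀' : MemLp (deriv ψ₀) 2 (volume : Measure ℝ))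
    (hπ₀L2 : MemLp π₀ 2 (volume : Measure ℝ)) :
    ∀ R > 0,
      Tendsto
        (fun t : ℝ => ∫ x in (-R : ℝ)..R,
          ((deriv ψ₀ (x + t) - deriv ψ₀ (x - t)) / 2
            + (π₀ (x + t) + π₀ (x - t)) / 2) ^ 2)
        atTop (nhds 0) := by
  intro R hR
  have hRR : -R ≤ R := by linarith
  set F : ℝ → ℝ := fun x => deriv ψ₀ x ^ 2 + π₀ x ^ 2
  have hF : Integrable F := hψ₀'.integrable_sq.add hπ₀L2.integrable_sq
  have hforward : Tendsto (fun t : ℝ => ∫ x in (-R : ℝ)..R, F (x + t)) atTop (nhds 0) := by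
    simpa only [integral_comp_add_right] using tendsto_intervalIntegral_of_tendsto_atTop hF
      (a := fun t => -R + t) (b := fun t => R + t)
      (tendsto_atTop_add_const_left _ (-R) tendsto_id)
      (tendsto_atTop_add_const_left _ R tendsto_id)
  have hbackward : Tendsto (fun t : ℝ => ∫ x in (-R : ℝ)..R, F (x - t)) atTop (nhds 0) := by
    simpa only [integral_comp_sub_right] using tendsto_intervalIntegral_of_tendsto_atBot hF
      (a := fun t => -R - t) (b := fun t => R - t)
      (by simpa only [sub_eq_add_neg] using
        tendsto_atBot_add_const_left _ (-R) tendsto_neg_atTop_atBot)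
      (by simpa only [sub_eq_add_neg] using
        tendsto_atBot_add_const_left _ R tendsto_neg_atTop_atBot)
  have hbound := hforward.add hbackward
  rw [add_zero] at hbound
  refine squeeze_zero (fun t => integral_nonneg hRR fun x _ => sq_nonneg _) (fun t => ?_) hbound
  have hshifts := (hF.comp_add_right t).add (hF.comp_sub_right t)
  rw [← integral_add (hF.comp_add_right t).intervalIntegrable
    (hF.comp_sub_right t).intervalIntegrable, integral_of_le hRR, integral_of_le hRR]
  exact integral_mono_of_nonneg (ae_of_all _ fun x => sq_nonneg _) hshifts.integrableOn
    (ae_of_all _ fun x => sq_half_sub_add_half_add_le _ _ _ _)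

/-- the time derivative of the d'Alembert solution,
`∂ₜψ(x,t) = (ψ₀'(x+t) − ψ₀'(x−t))/2 + (π₀(x+t)+π₀(x−t))/2`,
converges to `0` in `L²(−R,R)` for every `R > 0` as `t → +∞`. -/
theorem dAlembert_velocity_tendsto_zero
    (ψ₀ π₀ : ℝ → ℝ)
    (hψ₀ : Differentiable ℝ ψ₀)
    (hψ₀' : MemLp (deriv ψ₀) 2 (volume : Measure ℝ))
    (hπ₀L1 : Integrable π₀ (volume : Measure ℝ))
    (hπ₀L2 : MemLp π₀ 2 (volume : Measure ℝ)) :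
    ∀ R > 0,
      Tendsto
        (fun t : ℝ => ∫ x in (-R : ℝ)..R,
          ((deriv ψ₀ (x + t) - deriv ψ₀ (x - t)) / 2
            + (π₀ (x + t) + π₀ (x - t)) / 2) ^ 2)
        atTop (nhds 0) :=
  dAlembert_velocity_tendsto_zero_general ψ₀ π₀ hψ₀' hπ₀L2
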